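/- Let K ⊆ ℝⁿ be a closed convex cone and L a linear subspace with L ⊆ K. Then for every y ∈ ℝⁿ, the projection onto K decomposes as Π_K(y) = Π_{K ∩ L^⊥}(y) + P_L(y), where P_L is the orthogonal projection onto L and Π_C denotes the metric projection onto a closed convex set C. -/

import Mathlib

/-!
Write `P` for the orthogonal projection onto `L`. A point `v` of a convex set `S` is the nearest
point to `y` exactly when `⟪y - v, w - v⟫ ≤ 0` for all `w ∈ S`, and two points satisfying this
inequality coincide. Since `L ⊆ K` and `K` is closed under addition, `x ↦ x - P x` maps `K` into
`K ∩ Lᗮ`, and `q + P y ∈ K`. For `q ∈ Lᗮ` all cross terms between `L` and `Lᗮ` vanish, so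
`⟪y - (q + P y), x - (q + P y)⟫ = ⟪y - q, (x - P x) - q⟫`; the variational inequality of `q` on
`K ∩ Lᗮ` therefore becomes that of `q + P y` on `K`, and `p = q + P y`.
-/

open scoped RealInnerProductSpace

theorem add_mem_of_convex_of_smul_mem {E : Type*} [AddCommGroup E] [Module ℝ E] {K : Set E}
    (hKconvex : Convex ℝ K)
    (hKcone : ∀ c : ℝ, 0 ≤ c → ∀ θ ∈ K, c • θ ∈ K) {a b : E} (ha : a ∈ K) (hb : b ∈ K) :
    a + b ∈ K := by
  have hmid : (1 / 2 : ℝ) • a + (1 / 2 : ℝ) • b ∈ K :=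
    hKconvex ha hb (by norm_num) (by norm_num) (by norm_num)
  have hdouble : (2 : ℝ) • ((1 / 2 : ℝ) • a + (1 / 2 : ℝ) • b) = a + b := by
    rw [smul_add, smul_smul, smul_smul]; norm_num
  simpa only [hdouble] using hKcone 2 (by norm_num) _ hmid

section InnerProductSpace

variable {F : Type*} [NormedAddCommGroup F] [InnerProductSpace ℝ F]

theorem real_inner_sub_sub_nonpos_of_forall_dist_le {S : Set F} (hS : Convex ℝ S) {u v : F}
    (hv : v ∈ S) (hmin : ∀ x ∈ S, dist u v ≤ dist u x) : ∀ w ∈ S, ⟪u - v, w - v⟫ ≤ 0 := by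
  have : Nonempty S := ⟨⟨v, hv⟩⟩
  refine (norm_eq_iInf_iff_real_inner_le_zero hS hv).mp (le_antisymm ?_ ?_)
  · exact le_ciInf fun w => by simpa only [dist_eq_norm] using hmin w w.2
  · have hbdd : BddBelow (Set.range fun w : S => ‖u - w‖) :=
      ⟨0, by rintro _ ⟨w, rfl⟩; exact norm_nonneg _⟩
    exact ciInf_le hbdd ⟨v, hv⟩

theorem eq_of_real_inner_sub_sub_nonpos {u v w : F} (hv : ⟪u - v, w - v⟫ ≤ 0)
    (hw : ⟪u - w, v - w⟫ ≤ 0) : v = w := by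
  have hflip : ⟪u - v, v - w⟫ = -⟪u - v, w - v⟫ := by rw [← inner_neg_right, neg_sub]
  have hsum : ⟪v - w, v - w⟫ = ⟪u - w, v - w⟫ - ⟪u - v, v - w⟫ := by
    rw [← inner_sub_left, sub_sub_sub_cancel_left]
  have hnonpos : ⟪v - w, v - w⟫ ≤ 0 := by rw [hsum, hflip]; linarith
  exact sub_eq_zero.mp (inner_self_eq_zero.mp (le_antisymm hnonpos real_inner_self_nonneg))

theorem inner_sub_add_starProjection (L : Submodule ℝ F) [L.HasOrthogonalProjection]
    {q : F} (hq : q ∈ Lᗮ) (x y : F) :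
    ⟪y - (q + L.starProjection y), x - (q + L.starProjection y)⟫
      = ⟪y - q, (x - L.starProjection x) - q⟫ := by
  have hPx := L.starProjection_apply_mem x
  have hPy := L.starProjection_apply_mem y
  have hperp : (x - L.starProjection x) - q ∈ Lᗮ :=
    Lᗮ.sub_mem (L.sub_starProjection_mem_orthogonal x) hq
  have hcross₁ : ⟪(y - L.starProjection y) - q, L.starProjection x - L.starProjection y⟫ = 0 :=
    Submodule.inner_left_of_mem_orthogonal (L.sub_mem hPx hPy)
      (Lᗮ.sub_mem (L.sub_starProjection_mem_orthogonal y) hq)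
  have hcross₂ : ⟪L.starProjection y, (x - L.starProjection x) - q⟫ = 0 :=
    Submodule.inner_right_of_mem_orthogonal hPy hperp
  calc ⟪y - (q + L.starProjection y), x - (q + L.starProjection y)⟫
      = ⟪(y - L.starProjection y) - q,
          ((x - L.starProjection x) - q) + (L.starProjection x - L.starProjection y)⟫ := by
        congr 1 <;> abel
    _ = ⟪(y - q) - L.starProjection y, (x - L.starProjection x) - q⟫ := by
        rw [inner_add_right, hcross₁, add_zero, sub_right_comm]
    _ = ⟪y - q, (x - L.starProjection x) - q⟫ := by
        rw [inner_sub_left, hcross₂, sub_zero]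

theorem sub_starProjection_mem_of_convex_of_smul_mem {K : Set F} (hKconvex : Convex ℝ K)
    (hKcone : ∀ c : ℝ, 0 ≤ c → ∀ θ ∈ K, c • θ ∈ K) (L : Submodule ℝ F)
    [L.HasOrthogonalProjection] (hLK : (L : Set F) ⊆ K) {x : F} (hx : x ∈ K) :
    x - L.starProjection x ∈ K ∩ (Lᗮ : Set F) := by
  refine ⟨?_, L.sub_starProjection_mem_orthogonal x⟩
  rw [sub_eq_add_neg]
  exact add_mem_of_convex_of_smul_mem hKconvex hKcone hx
    (hLK (L.neg_mem (L.starProjection_apply_mem x)))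

end InnerProductSpace

theorem proj_cone_decomposition_general (n : ℕ) (K : Set (EuclideanSpace ℝ (Fin n)))
    (L : Submodule ℝ (EuclideanSpace ℝ (Fin n)))
    (hKconvex : Convex ℝ K)
    (hKcone : ∀ c : ℝ, 0 ≤ c → ∀ θ ∈ K, c • θ ∈ K)
    (hLK : (L : Set (EuclideanSpace ℝ (Fin n))) ⊆ K)
    (y p q : EuclideanSpace ℝ (Fin n))
    (hp : p ∈ K) (hpmin : ∀ x ∈ K, dist y p ≤ dist y x)
    (hq : q ∈ K ∩ (Lᗮ : Set (EuclideanSpace ℝ (Fin n))))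
    (hqmin : ∀ x ∈ K ∩ (Lᗮ : Set (EuclideanSpace ℝ (Fin n))), dist y q ≤ dist y x) :
    p = q + (L.orthogonalProjection y : EuclideanSpace ℝ (Fin n)) := by
  rw [← L.starProjection_apply]
  have hzK : q + L.starProjection y ∈ K :=
    add_mem_of_convex_of_smul_mem hKconvex hKcone hq.1 (hLK (L.starProjection_apply_mem y))
  have hVIp := real_inner_sub_sub_nonpos_of_forall_dist_le hKconvex hp hpmin
  have hVIq := real_inner_sub_sub_nonpos_of_forall_dist_le (hKconvex.inter Lᗮ.convex) hq hqmin
  refine eq_of_real_inner_sub_sub_nonpos (hVIp _ hzK) ?_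
  rw [inner_sub_add_starProjection L hq.2]
  exact hVIq _ (sub_starProjection_mem_of_convex_of_smul_mem hKconvex hKcone L hLK hp)

theorem proj_cone_decomposition (n : ℕ) (K : Set (EuclideanSpace ℝ (Fin n)))
    (L : Submodule ℝ (EuclideanSpace ℝ (Fin n)))
    (hKclosed : IsClosed K) (hKconvex : Convex ℝ K)
    (hKcone : ∀ c : ℝ, 0 ≤ c → ∀ θ ∈ K, c • θ ∈ K)
    (hLK : (L : Set (EuclideanSpace ℝ (Fin n))) ⊆ K)
    (y p q : EuclideanSpace ℝ (Fin n))
    (hp : p ∈ K) (hpmin : ∀ x ∈ K, dist y p ≤ dist y x)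
    (hq : q ∈ K ∩ (Lᗮ : Set (EuclideanSpace ℝ (Fin n))))
    (hqmin : ∀ x ∈ K ∩ (Lᗮ : Set (EuclideanSpace ℝ (Fin n))), dist y q ≤ dist y x) :
    p = q + (L.orthogonalProjection y : EuclideanSpace ℝ (Fin n)) :=
  proj_cone_decomposition_general n K L hKconvex hKcone hLK y p q hp hpmin hq hqmin
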